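/- Let 0 ≤ j ≤ k ≤ ℓ be integers with (k,ℓ) ≠ (j,j), and set k′ = k−j, ℓ′ = ℓ−j. Let N ≥ 1, let χ be a Dirichlet character modulo N, let a₀ ∈ (ℤ/Nℤ)^×, and let τ ∈ ℋ. Then ℰ^{ℓ′+1,k′+1}_{β_χ}(τ, h_{a₀}) = ( (−2πi)^{ℓ−k} π^{k′+1} / ( ℓ′! · Im(τ)^{k′+1} ) ) · Σ_{u∈(ℤ/Nℤ)^×} χ̄(u) F^{(ℓ−k)}_{ũ/N}(τ, k′+1), where ũ ∈ {0,…,N−1} is the representative of u and all series involved converge absolutely. -/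

import Mathlib

open Matrix Complex

noncomputable section

/-- The matrix `[[0, -1], [a₀, 0]]` as an element of `GL₂(ℤ/Nℤ)`. -/
def hUnit {N : ℕ} (a₀ : (ZMod N)ˣ) :
    Matrix.GeneralLinearGroup (Fin 2) (ZMod N) where
  val := !![0, -1; (a₀ : ZMod N), 0]
  inv := !![0, ((a₀⁻¹ : (ZMod N)ˣ) : ZMod N); -1, 0]
  val_inv := by
    ext i j
    fin_cases i <;> fin_cases j <;>
      simp [Matrix.mul_apply, Fin.sum_univ_succ, ← Units.val_mul]
  inv_val := by
    ext i j
    fin_cases i <;> fin_cases j <;>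
      simp [Matrix.mul_apply, Fin.sum_univ_succ, ← Units.val_mul]

/-- The divisor `β_χ`, given by `β_χ(v₁,v₂) = χ̄(-v₂)` if `v₁ = 0` and `0` otherwise. -/
def betaChi {N : ℕ} (χ : DirichletCharacter ℂ N) : (Fin 2 → ZMod N) → ℂ :=
  fun v => if v 0 = 0 then (starRingEnd ℂ) (χ (-(v 1))) else 0

/-- The `((c,d),v)`-term of the series `ℰ^{a,b}_β(τ,h)`. -/
def EabTerm (N : ℕ) (β : (Fin 2 → ZMod N) → ℂ)
    (h : Matrix.GeneralLinearGroup (Fin 2) (ZMod N)) (a b : ℕ) (τ : ℂ)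
    (p : ℤ × ℤ) (v : Fin 2 → ZMod N) : ℂ :=
  β ((h⁻¹).1.mulVec v) *
      Complex.exp (2 * Real.pi * Complex.I *
        ((p.1 : ℂ) * ((v 0).val : ℂ) + (p.2 : ℂ) * ((v 1).val : ℂ)) / N) /
    (((p.1 : ℂ) * τ + (p.2 : ℂ)) ^ a * ((p.1 : ℂ) * (starRingEnd ℂ τ) + (p.2 : ℂ)) ^ b)

/-- The series `ℰ^{a,b}_β(τ,h)`. -/
def Eab (N : ℕ) [NeZero N] (β : (Fin 2 → ZMod N) → ℂ)
    (h : Matrix.GeneralLinearGroup (Fin 2) (ZMod N)) (a b : ℕ) (τ : ℂ) : ℂ :=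
  ∑' p : {q : ℤ × ℤ // q ≠ 0}, ∑ v : Fin 2 → ZMod N, EabTerm N β h a b τ p.1 v

/-- The `(m,n)`-term of the series defining `F^{(w)}_α(τ,s)`. -/
def FTerm (w : ℕ) (α : ℝ) (τ : ℂ) (s : ℂ) (p : ℤ × ℤ) : ℂ :=
  Complex.exp (2 * Real.pi * Complex.I * (α : ℂ) * (p.1 : ℂ)) * ((τ.im : ℂ)) ^ s /
    (((p.1 : ℂ) * τ + (p.2 : ℂ)) ^ w *
      ((Complex.normSq ((p.1 : ℂ) * τ + (p.2 : ℂ)) : ℂ)) ^ s)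

/-- The real-analytic Eisenstein series
`F^{(w)}_α(τ,s) = (−2πi)^{−w} π^{−s} Γ(s+w) Σ'_{(m,n)} e^{2πiαm} y^s/((mτ+n)^w |mτ+n|^{2s})`. -/
def F (w : ℕ) (α : ℝ) (τ : ℂ) (s : ℂ) : ℂ :=
  (-(2 * (Real.pi : ℂ) * Complex.I)) ^ (-(w : ℤ)) * (Real.pi : ℂ) ^ (-s) *
    Complex.Gamma (s + (w : ℂ)) * ∑' p : {q : ℤ × ℤ // q ≠ 0}, FTerm w α τ s p.1

end

/-!
Since `β_χ(h_{a₀}⁻¹ v) = χ̄(v₁)` when `v₂ = 0` and vanishes otherwise, the finite sum over `v` in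
`ℰ^{ℓ′+1,k′+1}_{β_χ}(τ, h_{a₀})` collapses to
`Σ_u χ̄(u) e^{2πicũ/N} / ((cτ+d)^{ℓ′+1} (cτ̄+d)^{k′+1})`.
Because `|cτ+d|^{2(k′+1)} = (cτ+d)^{k′+1} (cτ̄+d)^{k′+1}`, the series over `(c,d)` of these terms
is `F^{(ℓ−k)}_{ũ/N}(τ, k′+1)` up to the factor `(−2πi)^{ℓ−k} π^{k′+1} / (Γ(ℓ′+1) y^{k′+1})`.
All series are dominated by `Σ |cτ+d|^{-n}` with `n ≥ 3`, which converges.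
-/

open scoped UpperHalfPlane Real ComplexConjugate

lemma summable_inv_norm_mul_add_pow {n : ℕ} (hn : 3 ≤ n) (τ : ℍ) :
    Summable fun p : ℤ × ℤ => (‖(p.1 : ℂ) * τ + p.2‖ ^ n)⁻¹ :=
  (summable_norm_iff.mpr (summable_prod_eisSummand hn τ)).congr fun p => by
    simp [EisensteinSeries.eisSummand]

lemma intCast_mul_conj_add (τ : ℂ) (p : ℤ × ℤ) :
    (p.1 : ℂ) * conj τ + p.2 = conj ((p.1 : ℂ) * τ + p.2) := by
  simp

lemma norm_mul_add_pow_mul_conj_pow (τ : ℂ) (p : ℤ × ℤ) (a b : ℕ) :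
    ‖((p.1 : ℂ) * τ + p.2) ^ a * ((p.1 : ℂ) * conj τ + p.2) ^ b‖ =
      ‖(p.1 : ℂ) * τ + p.2‖ ^ (a + b) := by
  rw [intCast_mul_conj_add, norm_mul, norm_pow, norm_pow, RCLike.norm_conj, pow_add]

/-- The common summand of `ℰ^{a,b}_{β_χ}` (after summing over `v`) and of `F^{(w)}_α`. -/
noncomputable def twistedEisensteinTerm (α : ℝ) (a b : ℕ) (τ : ℂ) (p : ℤ × ℤ) : ℂ :=
  exp (2 * π * I * α * p.1) / (((p.1 : ℂ) * τ + p.2) ^ a * ((p.1 : ℂ) * conj τ + p.2) ^ b)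

lemma norm_twistedEisensteinTerm (α : ℝ) (a b : ℕ) (τ : ℂ) (p : ℤ × ℤ) :
    ‖twistedEisensteinTerm α a b τ p‖ = (‖(p.1 : ℂ) * τ + p.2‖ ^ (a + b))⁻¹ := by
  rw [twistedEisensteinTerm, norm_div, norm_mul_add_pow_mul_conj_pow, norm_exp]
  simp

lemma summable_norm_twistedEisensteinTerm (α : ℝ) {a b : ℕ} (hab : 3 ≤ a + b) (τ : ℍ) :
    Summable fun p => ‖twistedEisensteinTerm α a b τ p‖ :=
  (summable_inv_norm_mul_add_pow hab τ).congr fun _ => (norm_twistedEisensteinTerm ..).symm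

lemma FTerm_natCast (w m : ℕ) (α : ℝ) (τ : ℂ) (p : ℤ × ℤ) :
    FTerm w α τ m p = τ.im ^ m * twistedEisensteinTerm α (w + m) m τ p := by
  have hnormSq : (normSq ((p.1 : ℂ) * τ + p.2) : ℂ) =
      ((p.1 : ℂ) * τ + p.2) * ((p.1 : ℂ) * conj τ + p.2) := by
    rw [intCast_mul_conj_add, mul_conj]
  rw [FTerm, twistedEisensteinTerm, cpow_natCast, cpow_natCast, hnormSq, mul_pow, ← mul_assoc,
    ← pow_add]
  ring

lemma summable_norm_FTerm_natCast {w m : ℕ} (hwm : 3 ≤ w + 2 * m) (α : ℝ) (τ : ℍ) :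
    Summable fun p => ‖FTerm w α τ m p‖ := by
  simp_rw [FTerm_natCast, norm_mul]
  exact (summable_norm_twistedEisensteinTerm α (by omega) τ).mul_left _

lemma F_natCast {w m n : ℕ} (hwm : w + m = n + 1) (α : ℝ) (τ : ℂ) :
    F w α τ m = ((-(2 * π * I)) ^ w)⁻¹ * ((π : ℂ) ^ m)⁻¹ * n.factorial * τ.im ^ m *
      ∑' p : {q : ℤ × ℤ // q ≠ 0}, twistedEisensteinTerm α (n + 1) m τ p := by
  have hΓ : Gamma (m + w) = n.factorial := by
    rw [← Gamma_nat_eq_factorial]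
    congr 1
    exact_mod_cast (by omega : m + w = n + 1)
  simp_rw [F, FTerm_natCast, hwm, tsum_mul_left, _root_.zpow_neg, zpow_natCast, cpow_neg,
    cpow_natCast, hΓ]
  ring

lemma norm_EabTerm (N : ℕ) (β : (Fin 2 → ZMod N) → ℂ)
    (h : GL (Fin 2) (ZMod N)) (a b : ℕ) (τ : ℂ) (p : ℤ × ℤ) (v : Fin 2 → ZMod N) :
    ‖EabTerm N β h a b τ p v‖ = ‖β ((h⁻¹).1 *ᵥ v)‖ * (‖(p.1 : ℂ) * τ + p.2‖ ^ (a + b))⁻¹ := by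
  rw [EabTerm, norm_div, norm_mul, norm_mul_add_pow_mul_conj_pow, norm_exp]
  simp [div_eq_mul_inv]

lemma summable_norm_EabTerm (N : ℕ) [NeZero N] (β : (Fin 2 → ZMod N) → ℂ)
    (h : GL (Fin 2) (ZMod N)) {a b : ℕ} (hab : 3 ≤ a + b) (τ : ℍ) :
    Summable fun p : {q : ℤ × ℤ // q ≠ 0} × (Fin 2 → ZMod N) =>
      ‖EabTerm N β h a b τ p.1 p.2‖ := by
  refine (summable_prod_of_nonneg fun _ => norm_nonneg _).mpr ⟨fun _ => .of_finite, ?_⟩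
  simp_rw [tsum_fintype, norm_EabTerm, ← Finset.sum_mul]
  exact ((summable_inv_norm_mul_add_pow hab τ).comp_injective Subtype.val_injective).mul_left _

lemma betaChi_hUnit_inv_mulVec {N : ℕ} (χ : DirichletCharacter ℂ N) (a₀ : (ZMod N)ˣ)
    (v : Fin 2 → ZMod N) :
    betaChi χ ((hUnit a₀)⁻¹.1 *ᵥ v) = if v 1 = 0 then conj (χ (v 0)) else 0 := by
  change betaChi χ (!![0, ((a₀⁻¹ : (ZMod N)ˣ) : ZMod N); -1, 0] *ᵥ v) = _
  simp [betaChi, Matrix.mulVec, dotProduct, Fin.sum_univ_two]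

lemma sum_units_eq_sum_of_map_nonunit {M R : Type*} [Monoid M] [Fintype M] [Fintype Mˣ]
    [AddCommMonoid R] {f : M → R} (hf : ∀ x, ¬IsUnit x → f x = 0) :
    ∑ u : Mˣ, f u = ∑ x, f x :=
  Fintype.sum_of_injective _ Units.val_injective _ _ (fun x hx => hf x hx) fun _ => rfl

lemma sum_EabTerm_betaChi_hUnit (N : ℕ) [NeZero N] (χ : DirichletCharacter ℂ N)
    (a₀ : (ZMod N)ˣ) (a b : ℕ) (τ : ℂ) (p : ℤ × ℤ) :
    ∑ v, EabTerm N (betaChi χ) (hUnit a₀) a b τ p v =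
      ∑ u : (ZMod N)ˣ, conj (χ u) * twistedEisensteinTerm ((u : ZMod N).val / N) a b τ p := by
  symm
  refine (sum_units_eq_sum_of_map_nonunit (f := fun x : ZMod N =>
    conj (χ x) * twistedEisensteinTerm (x.val / N) a b τ p) fun x hx => ?_).trans ?_
  · rw [χ.map_nonunit hx, map_zero, zero_mul]
  rw [← (finTwoArrowEquiv (ZMod N)).symm.sum_comp, Fintype.sum_prod_type]
  refine Finset.sum_congr rfl fun x _ => ?_
  have hvanish (y : ZMod N) (hy : y ≠ 0) :
      EabTerm N (betaChi χ) (hUnit a₀) a b τ p ((finTwoArrowEquiv (ZMod N)).symm (x, y)) = 0 := by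
    simp only [EabTerm, betaChi_hUnit_inv_mulVec]
    simp [hy]
  rw [Finset.sum_eq_single 0 (fun y _ hy => hvanish y hy) (by simp)]
  simp only [EabTerm, twistedEisensteinTerm, betaChi_hUnit_inv_mulVec,
    finTwoArrowEquiv_symm_apply, Matrix.cons_val_zero, Matrix.cons_val_one, if_true, ZMod.val_zero]
  rw [mul_div_assoc]
  congr 3
  push_cast
  ring

theorem Eab_eq_sum_F
    (k ℓ j : ℕ) (hjk : j ≤ k) (hkl : k ≤ ℓ) (hne : (k, ℓ) ≠ (j, j))
    (N : ℕ) [NeZero N] (χ : DirichletCharacter ℂ N)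
    (a₀ : (ZMod N)ˣ) (τ : UpperHalfPlane) :
    Summable (fun p : {q : ℤ × ℤ // q ≠ 0} × (Fin 2 → ZMod N) =>
        ‖EabTerm N (betaChi χ) (hUnit a₀) (ℓ - j + 1) (k - j + 1) (τ : ℂ) p.1.1 p.2‖) ∧
    (∀ u : (ZMod N)ˣ, Summable (fun p : {q : ℤ × ℤ // q ≠ 0} =>
        ‖FTerm (ℓ - k) (((u : ZMod N).val : ℝ) / N) (τ : ℂ) ((k - j + 1 : ℕ) : ℂ) p.1‖)) ∧
    Eab N (betaChi χ) (hUnit a₀) (ℓ - j + 1) (k - j + 1) (τ : ℂ)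
      = (-(2 * (Real.pi : ℂ) * Complex.I)) ^ (ℓ - k) * (Real.pi : ℂ) ^ (k - j + 1) /
          (((ℓ - j).factorial : ℂ) * ((τ.im : ℝ) : ℂ) ^ (k - j + 1)) *
        ∑ u : (ZMod N)ˣ,
          (starRingEnd ℂ) (χ u) *
            F (ℓ - k) (((u : ZMod N).val : ℝ) / N) (τ : ℂ) ((k - j + 1 : ℕ) : ℂ) := by
  have hweight : 3 ≤ ℓ - j + 1 + (k - j + 1) := by
    simp only [ne_eq, Prod.mk.injEq] at hne
    omega
  have hsum (u : (ZMod N)ˣ) : Summable fun p : {q : ℤ × ℤ // q ≠ 0} =>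
      twistedEisensteinTerm ((u : ZMod N).val / N) (ℓ - j + 1) (k - j + 1) τ p :=
    ((summable_norm_twistedEisensteinTerm _ hweight τ).comp_injective Subtype.val_injective).of_norm
  refine ⟨summable_norm_EabTerm N _ _ hweight τ, fun u => ?_, ?_⟩
  · exact (summable_norm_FTerm_natCast (w := ℓ - k) (m := k - j + 1) (by omega) _ τ).comp_injective
      Subtype.val_injective
  calc Eab N (betaChi χ) (hUnit a₀) (ℓ - j + 1) (k - j + 1) τ
      = ∑' p : {q : ℤ × ℤ // q ≠ 0}, ∑ u : (ZMod N)ˣ, conj (χ u) *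
          twistedEisensteinTerm ((u : ZMod N).val / N) (ℓ - j + 1) (k - j + 1) τ p :=
        tsum_congr fun p => sum_EabTerm_betaChi_hUnit ..
    _ = ∑ u : (ZMod N)ˣ, conj (χ u) * ∑' p : {q : ℤ × ℤ // q ≠ 0},
          twistedEisensteinTerm ((u : ZMod N).val / N) (ℓ - j + 1) (k - j + 1) τ p := by
        rw [Summable.tsum_finsetSum fun u _ => (hsum u).mul_left _]
        simp_rw [tsum_mul_left]
    _ = _ := by
        rw [Finset.mul_sum]
        refine Finset.sum_congr rfl fun u _ => ?_
        rw [F_natCast (by omega : ℓ - k + (k - j + 1) = ℓ - j + 1), UpperHalfPlane.coe_im]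
        have hy : (τ.im : ℂ) ≠ 0 := by exact_mod_cast τ.im_pos.ne'
        have hfact : ((ℓ - j).factorial : ℂ) ≠ 0 := by exact_mod_cast (ℓ - j).factorial_ne_zero
        field_simp
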